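/- Let J be a finite group and M a finitely generated J-module that is free as a ℤ-module. The norm map N : M^∨ → M^∨, f ↦ ∑_{σ∈J} σ·f, kills the augmentation submodule 𝔄_J(M^∨) and hence descends to a surjection (M^∨)_J ↠ N(M^∨) onto the image of the norm; the kernel of this surjection is isomorphic to the Pontryagin dual H¹(J,M)^D of the first cohomology group of M, i.e., there is a short exact sequence 0 → H¹(J,M)^D → (M^∨)_J → N(M^∨) → 0. -/

import Mathlib

/-! The kernel of the norm on `(M^∨)_J` is paired with `H¹(J, M)` by
`⟨f, c⟩ = |J|⁻¹ ∑_σ f (c σ) mod ℤ`. The pairing kills `𝔄_J (M^∨)`, and it kills coboundaries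
when `N f = 0`, because `∑_σ f (σ • m - m) = N f m - |J| f m`.

It is perfect. If `⟨f, -⟩ = 0`, then `|J|⁻¹ ∑_σ f (c σ)` is an integral linear form on `Z¹`. It
extends to `C¹ = (J → M)`, since `C¹ / Z¹ ⊆ C²` is free, and composed with `d⁰` it gives back
`-f`; every form `F ∘ d⁰` lies in `𝔄_J (M^∨)`. Conversely, a character of `H¹` extends from `Z¹`
to `C¹` (`ℚ/ℤ` is injective) and lifts to `ψ : C¹ → ℚ` (`C¹` is free). Then `f = -ψ ∘ d⁰` is
integral, satisfies `N f = 0`, and pairs to the given character, because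
`∑_σ d⁰ (c σ) = -|J| • c` for a cocycle `c`. -/

variable (J M : Type) [Group J] [Fintype J] [AddCommGroup M] [DistribMulAction J M]

/-- The augmentation submodule `𝔄_J (M^∨)` of the linear dual `M^∨ = Hom_ℤ(M, ℤ)`, for the
action `(σ · f) (m) = f (σ⁻¹ • m)`; it is generated by the elements `σ · f - f`, and the
coinvariants `(M^∨)_J` are the quotient of `M^∨` by this subgroup. -/
def dualAug : AddSubgroup (M →+ ℤ) :=
  AddSubgroup.closure
    {g | ∃ (σ : J) (f : M →+ ℤ), f.comp (DistribMulAction.toAddMonoidHom M σ⁻¹) - f = g}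

/-- The norm map `N : M^∨ → M^∨`, `f ↦ ∑_{σ ∈ J} σ · f`, where `(σ · f)(m) = f(σ⁻¹ • m)`. -/
def dualNorm : (M →+ ℤ) →+ (M →+ ℤ) where
  toFun f := ∑ σ : J, f.comp (DistribMulAction.toAddMonoidHom M σ⁻¹)
  map_zero' := by simp
  map_add' f g := by
    simp [AddMonoidHom.add_comp, Finset.sum_add_distrib]

instance : SMulCommClass J ℤ M :=
  ⟨fun g n m => ((DistribMulAction.toAddMonoidHom M g).map_zsmul n m)⟩

theorem Submodule.exists_extend_of_projective_quotient {R M N : Type*} [Ring R]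
    [AddCommGroup M] [Module R M] [AddCommGroup N] [Module R N] (p : Submodule R M)
    [Module.Projective R (M ⧸ p)] (f : p →ₗ[R] N) : ∃ g : M →ₗ[R] N, g ∘ₗ p.subtype = f := by
  obtain ⟨s, hs⟩ := Module.projective_lifting_property p.mkQ LinearMap.id p.mkQ_surjective
  have hs' (x : M) : p.mkQ (s (p.mkQ x)) = p.mkQ x := LinearMap.congr_fun hs (p.mkQ x)
  have hr (x : M) : ((LinearMap.id : M →ₗ[R] M) - s ∘ₗ p.mkQ) x ∈ p := by
    simpa [← Submodule.Quotient.mk_eq_zero, sub_eq_zero] using (hs' x).symm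
  refine ⟨f ∘ₗ LinearMap.codRestrict p _ hr, LinearMap.ext fun x => congrArg f (Subtype.ext ?_)⟩
  have hx : p.mkQ x = 0 := (Submodule.Quotient.mk_eq_zero p).2 x.2
  simp [hx]

theorem LinearMap.free_quotient_ker {R P Q : Type*} [CommRing R] [IsDomain R]
    [IsPrincipalIdealRing R] [AddCommGroup P] [Module R P] [Module.Finite R P]
    [AddCommGroup Q] [Module R Q] [Module.IsTorsionFree R Q] (f : P →ₗ[R] Q) :
    Module.Free R (P ⧸ LinearMap.ker f) :=
  Module.Free.of_equiv f.quotKerEquivRange.symm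

theorem AddMonoidHom.exists_intCast_comp_eq {N : Type*} [AddCommGroup N] (g : N →+ ℚ)
    (hg : ∀ x, ∃ k : ℤ, g x = k) : ∃ G : N →+ ℤ, (Int.castAddHom ℚ).comp G = g := by
  choose G hG using hg
  refine ⟨{ toFun := G, map_zero' := ?_, map_add' := fun x y => ?_ }, ext fun x => (hG x).symm⟩
  · exact_mod_cast (hG 0).symm.trans g.map_zero
  · exact Int.cast_injective (α := ℚ) (by push_cast; rw [← hG, ← hG, ← hG, map_add])

theorem AddMonoidHom.exists_zsmul_eq_of_forall_dvd {N : Type*} [AddCommGroup N] (g : N →+ ℤ)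
    {n : ℤ} (hn : n ≠ 0) (hg : ∀ x, n ∣ g x) : ∃ G : N →+ ℤ, n • G = g := by
  choose G hG using hg
  refine ⟨{ toFun := G, map_zero' := ?_, map_add' := fun x y => ?_ }, ext fun x => ?_⟩
  · exact mul_left_cancel₀ hn (by rw [← hG, map_zero, mul_zero])
  · exact mul_left_cancel₀ hn (by rw [mul_add, ← hG, ← hG, ← hG, map_add])
  · exact (hG x).symm

theorem AddCircle.coe_intCast_div_eq_zero_iff (k : ℤ) {n : ℕ} (hn : n ≠ 0) :
    (((k / n : ℚ)) : AddCircle (1 : ℚ)) = 0 ↔ (n : ℤ) ∣ k := by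
  rw [AddCircle.coe_eq_zero_iff]
  constructor
  · rintro ⟨m, hm⟩
    refine ⟨m, ?_⟩
    rw [zsmul_one, eq_div_iff (by exact_mod_cast hn)] at hm
    exact_mod_cast (hm.symm.trans (mul_comm _ _))
  · rintro ⟨m, rfl⟩
    refine ⟨m, ?_⟩
    push_cast
    field_simp
    simp

def cochainSum {ι N : Type*} [Fintype ι] [AddCommGroup N] : (N →+ ℤ) →+ ((ι → N) →+ ℤ) :=
  ∑ i : ι, (Pi.evalAddMonoidHom (fun _ : ι => N) i).compHom'

lemma cochainSum_apply {ι N : Type*} [Fintype ι] [AddCommGroup N] (f : N →+ ℤ) (h : ι → N) :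
    cochainSum f h = ∑ i : ι, f (h i) := by
  simp [cochainSum]

theorem AddMonoidHom.compHom'_injective {A B C : Type*} [AddGroup A] [AddGroup B]
    [AddCommGroup C] {f : A →+ B} (hf : Function.Surjective f) :
    Function.Injective (f.compHom' : (B →+ C) →+ (A →+ C)) :=
  fun _ _ h => (AddMonoidHom.cancel_right hf).1 h

universe u in
theorem groupCohomology.H1π_surjective {k G : Type u} [CommRing k] [Group G] (A : Rep k G) :
    Function.Surjective (groupCohomology.H1π A).hom :=
  (ModuleCat.epi_iff_surjective _).1 inferInstance

section DualCoinvariants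

open groupCohomology

variable {J M}

local notation "𝓐" => Rep.of (Representation.ofDistribMulAction ℤ J M)

lemma smul_sum_smul (σ : J) (m : M) : σ • ∑ τ : J, τ • m = ∑ τ : J, τ • m := by
  have h := (Representation.ofDistribMulAction ℤ J M).self_norm_apply σ m
  simpa only [Representation.norm_ofDistribMulAction_eq,
    Representation.ofDistribMulAction_apply_apply] using h

lemma dualNorm_apply (f : M →+ ℤ) (m : M) : dualNorm J M f m = f (∑ σ : J, σ • m) := by
  simp only [dualNorm, AddMonoidHom.coe_mk, ZeroHom.coe_mk, AddMonoidHom.finsetSum_apply,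
    AddMonoidHom.comp_apply, map_sum]
  exact Fintype.sum_equiv (Equiv.inv J) _ _ fun σ => rfl

lemma dualAug_le_ker_dualNorm : dualAug J M ≤ (dualNorm J M).ker := by
  rw [dualAug, AddSubgroup.closure_le]
  rintro _ ⟨σ, f, rfl⟩
  ext m
  rw [map_sub, AddMonoidHom.sub_apply, dualNorm_apply, dualNorm_apply, AddMonoidHom.comp_apply,
    DistribMulAction.toAddMonoidHom_apply, smul_sum_smul, sub_self, AddMonoidHom.zero_apply]

lemma d₀₁_sum_smul (m : M) : (d₀₁ 𝓐).hom (∑ σ : J, σ • m) = 0 := by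
  ext τ
  show τ • ∑ σ : J, σ • m - ∑ σ : J, σ • m = 0
  rw [smul_sum_smul, sub_self]

lemma comp_d₀₁_mem_dualAug (F : (J → M) →+ ℤ) :
    F.comp (d₀₁ 𝓐).hom.toAddMonoidHom ∈ dualAug J M := by
  classical
  have hF : F.comp (d₀₁ 𝓐).hom.toAddMonoidHom = ∑ σ : J,
      ((F.comp (AddMonoidHom.single _ σ)).comp (DistribSMul.toAddMonoidHom M σ⁻¹⁻¹) -
        F.comp (AddMonoidHom.single _ σ)) := by
    refine AddMonoidHom.ext fun m : M => ?_
    have hd : (d₀₁ 𝓐).hom m = ∑ σ : J, Pi.single σ (σ • m - m) := by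
      rw [← Finset.univ_sum_single ((d₀₁ 𝓐).hom m)]
      rfl
    show F ((d₀₁ 𝓐).hom m) = _
    simp [hd, Pi.single_sub]
  rw [hF]
  exact AddSubgroup.sum_mem _ fun σ _ => AddSubgroup.subset_closure ⟨σ⁻¹, _, rfl⟩

lemma cochainSum_d₀₁ (f : M →+ ℤ) (m : M) :
    cochainSum f ((d₀₁ 𝓐).hom m) = dualNorm J M f m - Fintype.card J • f m := by
  rw [cochainSum_apply, dualNorm_apply, map_sum]
  show ∑ σ : J, f (σ • m - m) = _
  simp [Finset.sum_sub_distrib]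

section Cocycle

variable {c : J → M} (hc : ∀ σ τ : J, c (σ * τ) = σ • c τ + c σ)
include hc

lemma cochainSum_translate_sub_of_cocycle (f : M →+ ℤ) (σ : J) :
    cochainSum (f.comp (DistribSMul.toAddMonoidHom M σ⁻¹) - f) c =
      -(Fintype.card J • f (c σ⁻¹)) := by
  have hsmul (τ : J) : σ⁻¹ • c τ = c (σ⁻¹ * τ) - c σ⁻¹ := eq_sub_of_add_eq (hc σ⁻¹ τ).symm
  simp only [map_sub, AddMonoidHom.sub_apply, cochainSum_apply, AddMonoidHom.comp_apply,
    DistribSMul.toAddMonoidHom_apply, hsmul, Finset.sum_sub_distrib]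
  rw [Fintype.sum_equiv (Equiv.mulLeft σ⁻¹) (fun τ => f (c (σ⁻¹ * τ))) (fun τ => f (c τ))
    fun τ => rfl]
  simp

lemma sum_d₀₁_of_cocycle : ∑ σ : J, (d₀₁ 𝓐).hom (c σ) = -(Fintype.card J • c) := by
  have hsmul (σ τ : J) : τ • c σ - c σ = c (τ * σ) - c τ - c σ := by rw [hc]; abel
  ext τ
  rw [Finset.sum_apply]
  show ∑ σ : J, (τ • c σ - c σ) = -(Fintype.card J • c τ)
  simp only [hsmul, Finset.sum_sub_distrib]
  rw [Fintype.sum_equiv (Equiv.mulLeft τ) (fun σ => c (τ * σ)) (fun σ => c σ) fun σ => rfl]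
  simp

end Cocycle

variable (J) in
def cocyclePairing : (M →+ ℤ) →+ (cocycles₁ 𝓐 →+ AddCircle (1 : ℚ)) where
  toFun f :=
    { toFun c := ((cochainSum f c.1 / Fintype.card J : ℚ) : AddCircle (1 : ℚ))
      map_zero' := by rw [ZeroMemClass.coe_zero, map_zero]; simp
      map_add' c d := by simp [add_div] }
  map_zero' := by ext; simp
  map_add' f g := by ext; simp [add_div]

lemma cocyclePairing_apply (f : M →+ ℤ) (c : cocycles₁ 𝓐) :
    cocyclePairing J f c = ((cochainSum f c / Fintype.card J : ℚ) : AddCircle (1 : ℚ)) := rfl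

lemma cocyclePairing_eq_zero_iff (f : M →+ ℤ) (c : cocycles₁ 𝓐) :
    cocyclePairing J f c = 0 ↔ (Fintype.card J : ℤ) ∣ cochainSum f c :=
  AddCircle.coe_intCast_div_eq_zero_iff _ Fintype.card_ne_zero

lemma dualAug_le_ker_cocyclePairing : dualAug J M ≤ (cocyclePairing J (M := M)).ker := by
  rw [dualAug, AddSubgroup.closure_le]
  rintro _ ⟨σ, f, rfl⟩
  ext c
  rw [AddMonoidHom.zero_apply, cocyclePairing_eq_zero_iff]
  refine ⟨-f (c σ⁻¹),
    (cochainSum_translate_sub_of_cocycle ((mem_cocycles₁_iff c.1).1 c.2) f σ).trans ?_⟩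
  simp

lemma ker_H1π_le_ker_cocyclePairing {f : M →+ ℤ} (hf : dualNorm J M f = 0) :
    (H1π 𝓐).hom.toAddMonoidHom.ker ≤ (cocyclePairing J f).ker := by
  intro c hc
  obtain ⟨m, hm⟩ := (H1π_eq_zero_iff c).1 hc
  rw [AddMonoidHom.mem_ker, cocyclePairing_eq_zero_iff, ← hm, cochainSum_d₀₁, hf]
  simp

theorem mem_dualAug_of_cocyclePairing_eq_zero [Module.Finite ℤ M] [Module.Free ℤ M]
    {f : M →+ ℤ} (hN : dualNorm J M f = 0) (hf : cocyclePairing J f = 0) : f ∈ dualAug J M := by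
  have : Module.Free ℤ ((J → M) ⧸ cocycles₁ 𝓐) := LinearMap.free_quotient_ker (d₁₂ 𝓐).hom
  obtain ⟨G, hG⟩ :=
    ((cochainSum f).comp (cocycles₁ 𝓐).subtype.toAddMonoidHom).exists_zsmul_eq_of_forall_dvd
      (Int.natCast_ne_zero.2 Fintype.card_ne_zero)
      fun c => (cocyclePairing_eq_zero_iff f c).1 (DFunLike.congr_fun hf c)
  obtain ⟨F, hF⟩ := (cocycles₁ 𝓐).exists_extend_of_projective_quotient G.toIntLinearMap
  suffices f = -F.toAddMonoidHom.comp (d₀₁ 𝓐).hom.toAddMonoidHom from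
    this ▸ neg_mem (comp_d₀₁_mem_dualAug _)
  ext m
  have hmem := d₀₁_apply_mem_cocycles₁ (A := 𝓐) m
  have hFm : F ((d₀₁ 𝓐).hom m) = G ⟨_, hmem⟩ := LinearMap.congr_fun hF ⟨_, hmem⟩
  have hGm : (Fintype.card J : ℤ) • G ⟨_, hmem⟩ = cochainSum f ((d₀₁ 𝓐).hom m) :=
    DFunLike.congr_fun hG ⟨_, hmem⟩
  rw [cochainSum_d₀₁, hN, AddMonoidHom.zero_apply, zero_sub, smul_eq_mul, nsmul_eq_mul] at hGm
  show f m = -F ((d₀₁ 𝓐).hom m)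
  rw [hFm]
  refine mul_left_cancel₀ (Int.natCast_ne_zero.2 (Fintype.card_ne_zero (α := J))) ?_
  rw [mul_neg, hGm, neg_neg]

theorem exists_cocyclePairing_eq_comp_H1π [Module.Free ℤ M] (φ : H1 𝓐 →+ AddCircle (1 : ℚ)) :
    ∃ f : M →+ ℤ, dualNorm J M f = 0 ∧
      cocyclePairing J f = φ.comp (H1π 𝓐).hom.toAddMonoidHom := by
  obtain ⟨χ, hχ⟩ := CharacterModule.dual_surjective_of_injective (cocycles₁ 𝓐).subtype
    Subtype.val_injective (φ.comp (H1π 𝓐).hom.toAddMonoidHom)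
  obtain ⟨ψ, hψ⟩ := Module.projective_lifting_property
    (QuotientAddGroup.mk' (AddSubgroup.zmultiples (1 : ℚ))).toIntLinearMap χ.toIntLinearMap
    (QuotientAddGroup.mk'_surjective _)
  have hψc (c : cocycles₁ 𝓐) : (ψ c : AddCircle (1 : ℚ)) = φ (H1π 𝓐 c) :=
    (LinearMap.congr_fun hψ c).trans (DFunLike.congr_fun hχ c)
  have hintegral (m : M) : ∃ k : ℤ, ψ ((d₀₁ 𝓐).hom m) = k := by
    have := hψc ⟨_, d₀₁_apply_mem_cocycles₁ m⟩
    rw [(H1π_eq_zero_iff _).2 ⟨m, rfl⟩, map_zero, AddCircle.coe_eq_zero_iff] at this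
    obtain ⟨k, hk⟩ := this
    exact ⟨k, ((zsmul_one k).symm.trans hk).symm⟩
  obtain ⟨h, hh⟩ :=
    (ψ.toAddMonoidHom.comp (d₀₁ 𝓐).hom.toAddMonoidHom).exists_intCast_comp_eq hintegral
  have hh_apply (m : M) : (h m : ℚ) = ψ ((d₀₁ 𝓐).hom m) := DFunLike.congr_fun hh m
  refine ⟨-h, ?_, ?_⟩
  · ext m
    rw [map_neg, AddMonoidHom.neg_apply, dualNorm_apply, AddMonoidHom.zero_apply, neg_eq_zero]
    exact Int.cast_injective (α := ℚ)
      ((hh_apply _).trans (by rw [d₀₁_sum_smul, map_zero, Int.cast_zero]))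
  · ext c
    have hsum : (cochainSum h c : ℚ) = -(Fintype.card J * ψ c) := by
      rw [cochainSum_apply, Int.cast_sum]
      simp_rw [hh_apply]
      rw [← map_sum, sum_d₀₁_of_cocycle (M := M) (c := ⇑c) ((mem_cocycles₁_iff c.1).1 c.2),
        map_neg, map_nsmul, nsmul_eq_mul]
    rw [cocyclePairing_apply, map_neg, AddMonoidHom.neg_apply, Int.cast_neg, hsum, neg_neg,
      mul_div_cancel_left₀ _ (Nat.cast_ne_zero.2 Fintype.card_ne_zero)]
    exact hψc c

def coinvNorm : (M →+ ℤ) ⧸ dualAug J M →+ (M →+ ℤ) :=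
  QuotientAddGroup.lift _ (dualNorm J M) dualAug_le_ker_dualNorm

def coinvPairing : (M →+ ℤ) ⧸ dualAug J M →+ (cocycles₁ 𝓐 →+ AddCircle (1 : ℚ)) :=
  QuotientAddGroup.lift _ (cocyclePairing J) dualAug_le_ker_cocyclePairing

theorem injective_coinvPairing_comp_ker [Module.Finite ℤ M] [Module.Free ℤ M] :
    Function.Injective (coinvPairing.comp (coinvNorm (J := J) (M := M)).ker.subtype) := by
  rw [injective_iff_map_eq_zero]
  rintro ⟨x, hx⟩ h
  obtain ⟨f, rfl⟩ := QuotientAddGroup.mk_surjective x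
  exact Subtype.ext
    ((QuotientAddGroup.eq_zero_iff f).2 (mem_dualAug_of_cocyclePairing_eq_zero hx h))

theorem range_coinvPairing_comp_ker [Module.Free ℤ M] :
    (coinvPairing.comp (coinvNorm (J := J) (M := M)).ker.subtype).range =
      (H1π 𝓐).hom.toAddMonoidHom.compHom'.range := by
  ext χ
  constructor
  · rintro ⟨⟨x, hx⟩, rfl⟩
    obtain ⟨f, rfl⟩ := QuotientAddGroup.mk_surjective x
    have hinv := Function.rightInverse_surjInv (groupCohomology.H1π_surjective 𝓐)
    let χ : {χ // _ ≤ AddMonoidHom.ker χ} :=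
      ⟨cocyclePairing J f, ker_H1π_le_ker_cocyclePairing hx⟩
    exact ⟨(H1π 𝓐).hom.toAddMonoidHom.liftOfRightInverse _ hinv χ,
      AddMonoidHom.liftOfRightInverse_comp (H1π 𝓐).hom.toAddMonoidHom _ hinv χ⟩
  · rintro ⟨φ, rfl⟩
    obtain ⟨f, hN, hf⟩ := exists_cocyclePairing_eq_comp_H1π φ
    exact ⟨⟨QuotientAddGroup.mk f, hN⟩, hf⟩

end DualCoinvariants

theorem dualNorm_descends_and_kernel [Module.Finite ℤ M] [Module.Free ℤ M] :
    (∀ g ∈ dualAug J M, dualNorm J M g = 0) ∧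
    ∃ q : ((M →+ ℤ) ⧸ dualAug J M) →+ (M →+ ℤ),
      (∀ f : M →+ ℤ, q (QuotientAddGroup.mk f) = dualNorm J M f) ∧
      Set.range ⇑q = ↑(dualNorm J M).range ∧
      Nonempty (q.ker ≃+
        ((groupCohomology.H1 (Rep.of (Representation.ofDistribMulAction ℤ J M))) →+
          AddCircle (1 : ℚ))) := by
  refine ⟨fun g hg => dualAug_le_ker_dualNorm hg, coinvNorm, fun f => rfl, ?_, ?_⟩
  · rw [AddMonoidHom.coe_range, ← QuotientAddGroup.mk_surjective.range_comp]
    rfl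
  · exact ⟨(AddMonoidHom.ofInjective injective_coinvPairing_comp_ker).trans
      ((AddEquiv.addSubgroupCongr range_coinvPairing_comp_ker).trans
        (AddMonoidHom.ofInjective
          (AddMonoidHom.compHom'_injective (groupCohomology.H1π_surjective _))).symm)⟩
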